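/- arXiv:1005.1318 — 2 statements merged into one kernel-verified Lean document; each statement's English description precedes it below -/
import Mathlib

section
/- For every integer k ≥ 1, each entry z_ℓ of the Suzuki coefficient list Z_k satisfies |z_ℓ| ≤ 4k/3^k, and consequently ∑_{ℓ=1}^{5^{k−1}} |z_ℓ| ≤ 4k·5^{k−1}/3^k. -/
noncomputable section

/-- Suzuki splitting parameter `p_r = (4 - 4^{1/(2r-1)})⁻¹`. -/
def suzukiP (r : ℕ) : ℝ := (4 - (4 : ℝ) ^ ((1 : ℝ) / (2 * (r : ℝ) - 1)))⁻¹

/-- The list `Z_k` of time coefficients of the unwound Suzuki formula `S_{2k}`: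
`Z₁ = (1)` and `Z_k = (p_k Z_{k-1}, p_k Z_{k-1}, (1-4p_k) Z_{k-1}, p_k Z_{k-1}, p_k Z_{k-1})`. -/
def suzukiZ : ℕ → List ℝ
  | 0 => [1]
  | 1 => [1]
  | (k + 2) =>
      (suzukiZ (k + 1)).map (fun z => suzukiP (k + 2) * z) ++
      (suzukiZ (k + 1)).map (fun z => suzukiP (k + 2) * z) ++
      (suzukiZ (k + 1)).map (fun z => (1 - 4 * suzukiP (k + 2)) * z) ++
      (suzukiZ (k + 1)).map (fun z => suzukiP (k + 2) * z) ++
      (suzukiZ (k + 1)).map (fun z => suzukiP (k + 2) * z)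

/-! Both Suzuki weights `p_r` and `1 - 4 p_r` have absolute value at most `r / (3 (r - 1))`, so
the entries of `Z_k` are bounded by a telescoping product. The weight bound reduces to
`4 ^ (1 / (2r - 1)) ≤ 1 + 3 / (4r - 3)`, i.e. `4 ≤ (1 + 3 / (2n - 1)) ^ n` for `n = 2r - 1`,
which already follows from the binomial expansion up to the cubic term (at `n = 3` it reads
`(8/5)^3 ≥ 4`). -/

theorem cubic_taylor_le_one_add_pow {x : ℝ} (hx : 0 ≤ x) (n : ℕ) :
    1 + n * x + n * (n - 1) / 2 * x ^ 2 + n * (n - 1) * (n - 2) / 6 * x ^ 3 ≤ (1 + x) ^ n := by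
  induction n with
  | zero => simp
  | succ n ih =>
    have hcoeff : 0 ≤ (n : ℝ) * (n - 1) * (n - 2) := by
      rcases n with _ | _ | m
      · norm_num
      · norm_num
      · push_cast; ring_nf; positivity
    calc _ ≤ (1 + n * x + n * (n - 1) / 2 * x ^ 2 + n * (n - 1) * (n - 2) / 6 * x ^ 3) *
            (1 + x) := by
          push_cast; nlinarith [mul_nonneg hcoeff (pow_nonneg hx 4)]
      _ ≤ (1 + x) ^ n * (1 + x) := by gcongr
      _ = (1 + x) ^ (n + 1) := (pow_succ _ _).symm

theorem four_le_one_add_three_div_pow {n : ℕ} (hn : 3 ≤ n) :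
    4 ≤ (1 + 3 / (2 * n - 1 : ℝ)) ^ n := by
  have hn' : (3 : ℝ) ≤ n := by exact_mod_cast hn
  have hy : 0 < (n : ℝ) * 2 - 1 := by linarith
  refine le_trans ?_ (cubic_taylor_le_one_add_pow (div_nonneg (by norm_num) (by linarith)) n)
  field_simp
  have hcubic : 0 ≤ (n : ℝ) * (n - 3) * (n - 1) :=
    mul_nonneg (mul_nonneg (by linarith) (by linarith)) (by linarith)
  nlinarith [hcubic]

theorem four_rpow_one_div_le {r : ℕ} (hr : 2 ≤ r) :
    (4 : ℝ) ^ (1 / (2 * (r : ℝ) - 1)) ≤ 1 + 3 / (4 * r - 3) := by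
  have hcast : 2 * (r : ℝ) - 1 = ((2 * r - 1 : ℕ) : ℝ) := by
    rw [Nat.cast_sub (by omega)]; push_cast; ring
  have hr' : (2 : ℝ) ≤ r := by exact_mod_cast hr
  have hpos : (0 : ℝ) < 4 * r - 3 := by linarith
  rw [one_div, Real.rpow_inv_le_iff_of_pos (by norm_num) (by positivity) (by linarith), hcast,
    Real.rpow_natCast]
  convert four_le_one_add_three_div_pow (n := 2 * r - 1) (by omega) using 4
  rw [← hcast]; ring

theorem one_third_lt_suzukiP {r : ℕ} (hr : 2 ≤ r) : 1 / 3 < suzukiP r := by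
  have hr' : (2 : ℝ) ≤ r := by exact_mod_cast hr
  have hsmall : 3 / (4 * (r : ℝ) - 3) < 2 := by
    rw [div_lt_iff₀ (by linarith)]; linarith
  have hroot := four_rpow_one_div_le hr
  have hroot_gt : 1 < (4 : ℝ) ^ (1 / (2 * (r : ℝ) - 1)) :=
    Real.one_lt_rpow (by norm_num) (div_pos one_pos (by linarith))
  rw [suzukiP, one_div, inv_lt_inv₀ (by norm_num) (by linarith)]
  linarith

theorem suzukiP_le {r : ℕ} (hr : 2 ≤ r) : suzukiP r ≤ (4 * r - 3) / (12 * (r - 1)) := by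
  have hr' : (2 : ℝ) ≤ r := by exact_mod_cast hr
  have hdenom : 12 * ((r : ℝ) - 1) / (4 * r - 3) = 4 - (1 + 3 / (4 * r - 3)) := by
    have h43 : 4 * (r : ℝ) - 3 ≠ 0 := by linarith
    rw [div_eq_iff h43, sub_mul, add_mul, div_mul_cancel₀ _ h43]
    ring
  rw [suzukiP, ← inv_div (12 * ((r : ℝ) - 1))]
  apply inv_anti₀ (div_pos (by linarith) (by linarith))
  linarith [four_rpow_one_div_le hr]

theorem abs_suzukiP_le {r : ℕ} (hr : 2 ≤ r) : |suzukiP r| ≤ (r : ℝ) / (3 * (r - 1)) := by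
  have hr' : (2 : ℝ) ≤ r := by exact_mod_cast hr
  rw [abs_of_pos (by linarith [one_third_lt_suzukiP hr])]
  refine (suzukiP_le hr).trans ?_
  rw [div_le_div_iff₀ (by linarith) (by linarith)]
  nlinarith

theorem abs_one_sub_four_mul_suzukiP_le {r : ℕ} (hr : 2 ≤ r) :
    |1 - 4 * suzukiP r| ≤ (r : ℝ) / (3 * (r - 1)) := by
  have hr' : (2 : ℝ) ≤ r := by exact_mod_cast hr
  have hcoeff : 4 * ((4 * r - 3) / (12 * ((r : ℝ) - 1))) - 1 = r / (3 * (r - 1)) := by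
    field_simp [(by linarith : (r - 1 : ℝ) ≠ 0)]; ring
  rw [abs_of_neg (by linarith [one_third_lt_suzukiP hr])]
  linarith [suzukiP_le hr]

theorem length_suzukiZ : ∀ k, (suzukiZ k).length = 5 ^ (k - 1)
  | 0 | 1 => rfl
  | k + 2 => by
    simp only [suzukiZ, List.length_append, List.length_map, length_suzukiZ (k + 1),
      Nat.add_sub_cancel]
    rw [show k + 2 - 1 = k + 1 by omega, pow_succ]
    ring

theorem exists_eq_mul_of_mem_suzukiZ_succ {k : ℕ} (hk : 1 ≤ k) {z : ℝ}
    (hz : z ∈ suzukiZ (k + 1)) :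
    ∃ w ∈ suzukiZ k, z = suzukiP (k + 1) * w ∨ z = (1 - 4 * suzukiP (k + 1)) * w := by
  obtain ⟨j, rfl⟩ := Nat.exists_eq_add_of_le' hk
  simp only [suzukiZ, List.mem_append, List.mem_map] at hz
  rcases hz with ((((⟨w, hw, rfl⟩ | ⟨w, hw, rfl⟩) | ⟨w, hw, rfl⟩) | ⟨w, hw, rfl⟩) |
    ⟨w, hw, rfl⟩)
  all_goals first | exact ⟨w, hw, .inl rfl⟩ | exact ⟨w, hw, .inr rfl⟩

theorem abs_le_of_mem_suzukiZ {k : ℕ} (hk : 1 ≤ k) {z : ℝ} (hz : z ∈ suzukiZ k) :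
    |z| ≤ 4 * k / 3 ^ k := by
  induction k, hk using Nat.le_induction generalizing z with
  | base =>
    simp only [suzukiZ, List.mem_singleton] at hz
    norm_num [hz]
  | succ k hk ih =>
    obtain ⟨w, hw, hzw⟩ := exists_eq_mul_of_mem_suzukiZ_succ hk hz
    obtain ⟨c, hc, rfl⟩ :
        ∃ c, |c| ≤ ((k + 1 : ℕ) : ℝ) / (3 * ((k + 1 : ℕ) - 1)) ∧ z = c * w := by
      rcases hzw with h | h
      · exact ⟨_, abs_suzukiP_le (by omega), h⟩
      · exact ⟨_, abs_one_sub_four_mul_suzukiP_le (by omega), h⟩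
    have hk0 : (k : ℝ) ≠ 0 := Nat.cast_ne_zero.2 (by omega)
    calc |c * w| = |c| * |w| := abs_mul c w
      _ ≤ ((k + 1 : ℕ) : ℝ) / (3 * ((k + 1 : ℕ) - 1)) * (4 * k / 3 ^ k) :=
          mul_le_mul hc (ih hw) (abs_nonneg w) ((abs_nonneg c).trans hc)
      _ = 4 * ((k + 1 : ℕ) : ℝ) / 3 ^ (k + 1) := by
          rw [Nat.cast_succ, add_sub_cancel_right, pow_succ]
          field_simp

/-- For every `k ≥ 1`, each Suzuki coefficient `z_ℓ` of `Z_k` satisfies `|z_ℓ| ≤ 4k/3^k`, and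
consequently `∑_{ℓ=1}^{5^{k-1}} |z_ℓ| ≤ 4k·5^{k-1}/3^k`. -/
theorem suzukiZ_abs_bound (k : ℕ) (hk : 1 ≤ k) :
    (∀ z ∈ suzukiZ k, |z| ≤ 4 * (k : ℝ) / 3 ^ k) ∧
    ((suzukiZ k).map (fun z => |z|)).sum ≤ 4 * (k : ℝ) * 5 ^ (k - 1) / 3 ^ k := by
  have hentry : ∀ z ∈ suzukiZ k, |z| ≤ 4 * (k : ℝ) / 3 ^ k := fun z hz ↦
    abs_le_of_mem_suzukiZ hk hz
  refine ⟨hentry, ?_⟩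
  calc ((suzukiZ k).map (fun z => |z|)).sum
      ≤ ((suzukiZ k).map (fun z => |z|)).length • (4 * (k : ℝ) / 3 ^ k) :=
        List.sum_le_card_nsmul _ _ (by simpa using hentry)
    _ = 4 * (k : ℝ) * 5 ^ (k - 1) / 3 ^ k := by
        rw [List.length_map, length_suzukiZ, nsmul_eq_mul]
        push_cast
        ring
end
end

section
/- For r ≥ 2 let p_r = (4 − 4^{1/(2r−1)})^{−1} and q_r = max{p_r, 4p_r − 1}. Then (q_r) is a decreasing sequence of positive numbers, and for every integer k ≥ 1, 3/3^k ≤ ∏_{r=2}^{k} q_r ≤ 4k/3^k (the empty product for k = 1 being 1). -/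
/-!
Write `x_r = 4^{1/(2r-1)}`, so that `1 < x_r < 2` for `r ≥ 2`. Then `p_r = 1/(4 - x_r) > 1/3`,
hence `4 p_r - 1 > p_r` and `q_r = x_r/(4 - x_r)`, an increasing function of `x_r`; as `x_r`
decreases in `r`, so does `q_r`, and `x_r > 1` gives `q_r > 1/3`. For the upper bound, the
estimate `log (1 + a) ≥ 2a/(a + 2)` yields `x_r ≤ 4r/(4r - 3)`, i.e. `q_r ≤ r/(3(r - 1))`, and
this product telescopes to `3k/3^k`.
-/

noncomputable section

/-- `q_r = max { p_r, 4 p_r - 1 }`. -/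
def suzukiQ (r : ℕ) : ℝ := max (suzukiP r) (4 * suzukiP r - 1)

open Real Finset

def suzukiRoot (r : ℕ) : ℝ := (4 : ℝ) ^ ((1 : ℝ) / (2 * (r : ℝ) - 1))

lemma suzukiP_eq (r : ℕ) : suzukiP r = (4 - suzukiRoot r)⁻¹ := rfl

lemma one_lt_suzukiRoot {r : ℕ} (hr : 1 ≤ r) : 1 < suzukiRoot r := by
  have hr' : (1 : ℝ) ≤ r := by exact_mod_cast hr
  exact one_lt_rpow (by norm_num) (div_pos one_pos (by linarith))

lemma suzukiRoot_lt_two {r : ℕ} (hr : 2 ≤ r) : suzukiRoot r < 2 := by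
  have hr' : (2 : ℝ) ≤ r := by exact_mod_cast hr
  have h : (4 : ℝ) ^ ((1 : ℝ) / 2) = 2 := by
    rw [show (4 : ℝ) = 2 ^ (2 : ℝ) by norm_num, ← rpow_mul (by norm_num)]
    norm_num
  rw [← h, suzukiRoot, rpow_lt_rpow_left_iff (by norm_num), div_lt_div_iff₀ (by linarith) two_pos]
  linarith

lemma suzukiRoot_succ_lt {r : ℕ} (hr : 1 ≤ r) : suzukiRoot (r + 1) < suzukiRoot r := by
  have hr' : (1 : ℝ) ≤ r := by exact_mod_cast hr
  rw [suzukiRoot, suzukiRoot, rpow_lt_rpow_left_iff (by norm_num),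
    div_lt_div_iff₀ (by push_cast; linarith) (by linarith)]
  push_cast
  linarith

lemma rpow_le_one_add_of_mul_log_le {b t a : ℝ} (hb : 0 < b) (ha : 0 ≤ a)
    (h : t * log b ≤ 2 * a / (a + 2)) : b ^ t ≤ 1 + a := by
  rw [← log_le_log_iff (rpow_pos_of_pos hb t) (by linarith), log_rpow hb]
  exact h.trans (le_log_one_add_of_nonneg ha)

lemma suzukiRoot_le {r : ℕ} (hr : 2 ≤ r) : suzukiRoot r ≤ 4 * r / (4 * r - 3) := by
  rcases hr.eq_or_lt with rfl | hr3
  · -- the logarithmic estimate below misses `r = 2` by a hair; here `4 ≤ (8/5)^3` instead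
    rw [suzukiRoot, show (1 : ℝ) / (2 * ((2 : ℕ) : ℝ) - 1) = (3 : ℝ)⁻¹ by norm_num,
      rpow_inv_le_iff_of_pos (by norm_num) (by norm_num) (by norm_num)]
    norm_num
  · have hr' : (3 : ℝ) ≤ r := by exact_mod_cast hr3
    have hd : (0 : ℝ) < 4 * r - 3 := by linarith
    have hlog4 : log 4 < 1.3863 := by
      rw [show (4 : ℝ) = 2 ^ 2 by norm_num, log_pow]
      linarith [log_two_lt_d9]
    rw [show 4 * (r : ℝ) / (4 * r - 3) = 1 + 3 / (4 * r - 3) by field_simp; ring]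
    refine rpow_le_one_add_of_mul_log_le four_pos (div_nonneg three_pos.le hd.le) ?_
    calc 1 / (2 * (r : ℝ) - 1) * log 4 ≤ 6 / (8 * r - 3) := by
          rw [div_mul_eq_mul_div, div_le_div_iff₀ (by linarith) (by linarith)]
          nlinarith
      _ = 2 * (3 / (4 * r - 3)) / (3 / (4 * r - 3) + 2) := by
          rw [div_add' _ _ _ hd.ne', mul_div_assoc', div_div_div_cancel_right₀ hd.ne']
          ring

lemma suzukiQ_eq {r : ℕ} (hr : 2 ≤ r) : suzukiQ r = suzukiRoot r / (4 - suzukiRoot r) := by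
  have h1 := one_lt_suzukiRoot (one_le_two.trans hr)
  have h2 := suzukiRoot_lt_two hr
  have hp : (3 : ℝ)⁻¹ ≤ suzukiP r := by
    rw [suzukiP_eq]
    exact inv_anti₀ (by linarith) (by linarith)
  have hd : 4 - suzukiRoot r ≠ 0 := by linarith
  rw [suzukiQ, max_eq_right (by linarith), suzukiP_eq]
  field_simp
  ring

lemma one_third_lt_suzukiQ {r : ℕ} (hr : 2 ≤ r) : 1 / 3 < suzukiQ r := by
  have h1 := one_lt_suzukiRoot (one_le_two.trans hr)
  have h2 := suzukiRoot_lt_two hr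
  rw [suzukiQ_eq hr, div_lt_div_iff₀ three_pos (by linarith)]
  linarith

lemma suzukiQ_pos {r : ℕ} (hr : 2 ≤ r) : 0 < suzukiQ r :=
  (one_third_lt_suzukiQ hr).trans' (by norm_num)

lemma suzukiQ_succ_lt {r : ℕ} (hr : 2 ≤ r) : suzukiQ (r + 1) < suzukiQ r := by
  have h := suzukiRoot_succ_lt (one_le_two.trans hr)
  have h2 := suzukiRoot_lt_two hr
  have h2' := suzukiRoot_lt_two (hr.trans r.le_succ)
  rw [suzukiQ_eq hr, suzukiQ_eq (hr.trans r.le_succ),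
    div_lt_div_iff₀ (by linarith) (by linarith)]
  linarith

lemma suzukiQ_le {r : ℕ} (hr : 2 ≤ r) : suzukiQ r ≤ r / (3 * (r - 1)) := by
  have hr' : (2 : ℝ) ≤ r := by exact_mod_cast hr
  have h := suzukiRoot_le hr
  have h2 := suzukiRoot_lt_two hr
  rw [le_div_iff₀ (by linarith)] at h
  rw [suzukiQ_eq hr, div_le_div_iff₀ (by linarith) (by linarith)]
  linarith

lemma prod_Icc_div_three_mul_pred {k : ℕ} (hk : 1 ≤ k) :
    ∏ r ∈ Icc 2 k, (r : ℝ) / (3 * (r - 1)) = 3 * k / 3 ^ k := by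
  induction k, hk using Nat.le_induction with
  | base => norm_num
  | succ k hk ih =>
    have hk' : (k : ℝ) ≠ 0 := by positivity
    rw [prod_Icc_succ_top (by omega), ih]
    push_cast
    rw [add_sub_cancel_right]
    field_simp
    ring

lemma prod_Icc_one_third {k : ℕ} (hk : 1 ≤ k) : ∏ _r ∈ Icc 2 k, (1 / 3 : ℝ) = 3 / 3 ^ k := by
  obtain ⟨n, rfl⟩ := Nat.exists_eq_add_of_le' hk
  rw [prod_const, Nat.card_Icc, show n + 1 + 1 - 2 = n by omega, pow_succ]
  field_simp
  rw [← mul_pow]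
  norm_num

/-- The `q_r` form a decreasing sequence of positive numbers, and for every `k ≥ 1`,
`3/3^k ≤ ∏_{r=2}^{k} q_r ≤ 4k/3^k` (the empty product for `k = 1` being `1`). -/
theorem suzukiQ_decreasing_pos_and_prod_bounds :
    (∀ r : ℕ, 2 ≤ r → 0 < suzukiQ r) ∧
    (∀ r : ℕ, 2 ≤ r → suzukiQ (r + 1) < suzukiQ r) ∧
    (∀ k : ℕ, 1 ≤ k →
      3 / 3 ^ k ≤ ∏ r ∈ Finset.Icc 2 k, suzukiQ r ∧
      ∏ r ∈ Finset.Icc 2 k, suzukiQ r ≤ 4 * (k : ℝ) / 3 ^ k) := by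
  refine ⟨fun r => suzukiQ_pos, fun r => suzukiQ_succ_lt, fun k hk => ⟨?_, ?_⟩⟩
  · calc 3 / 3 ^ k = ∏ _r ∈ Icc 2 k, (1 / 3 : ℝ) := (prod_Icc_one_third hk).symm
      _ ≤ ∏ r ∈ Icc 2 k, suzukiQ r :=
        prod_le_prod (fun _ _ => by norm_num)
          fun r hr => (one_third_lt_suzukiQ (mem_Icc.1 hr).1).le
  · calc ∏ r ∈ Icc 2 k, suzukiQ r ≤ ∏ r ∈ Icc 2 k, (r : ℝ) / (3 * (r - 1)) :=
        prod_le_prod (fun r hr => (suzukiQ_pos (mem_Icc.1 hr).1).le)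
          fun r hr => suzukiQ_le (mem_Icc.1 hr).1
      _ = 3 * k / 3 ^ k := prod_Icc_div_three_mul_pred hk
      _ ≤ 4 * k / 3 ^ k := by gcongr; norm_num
end
end
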